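/- Define ρ̃(a,b,c,d,e,f) to be the 2×2 real matrix with entries ρ̃₁₁ = (a−d+1)d + b(f−c), ρ̃₁₂ = cd − be + f, ρ̃₂₁ = c(d−1) − be, ρ̃₂₂ = −c² + fc + (a−d−1)e. Define V₁(r,s,t) = (s, t, r, 0, 0, r) and V₂(u,v,w) = (1 − 2uw + vw², w(1 − uw + vw²), u − vw, −vw², v, u + vw). Then { x ∈ ℝ⁶ : ρ̃(x) + ρ̃(x)ᵀ = 0 and ρ̃(x) ≠ 0 } = { V₁(r,s,t) : r ≠ 0, s,t ∈ ℝ } ∪ { V₂(u,v,w) : u ≠ 0, v,w ∈ ℝ }. -/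

import Mathlib

open Matrix

/-- The space of Type B models: `(a,b,c,d,e,f)` records the Christoffel symbols
`Γᵢⱼᵏ = Aᵢⱼᵏ / x¹`. -/
abbrev R6 : Type := ℝ × ℝ × ℝ × ℝ × ℝ × ℝ

/-- `(x¹)²` times the Ricci tensor of the Type B model `𝒩(a,b,c,d,e,f)`. -/
def ρB : R6 → Matrix (Fin 2) (Fin 2) ℝ
  | (a, b, c, d, e, f) =>
    !![(a-d+1)*d + b*(f-c), c*d - b*e + f;
       c*(d-1) - b*e, -c^2 + f*c + (a-d-1)*e]

def V1 : ℝ → ℝ → ℝ → R6 := fun r s t => (s, t, r, 0, 0, r)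

def V2 : ℝ → ℝ → ℝ → R6 := fun u v w =>
  (1 - 2*u*w + v*w^2, w*(1 - u*w + v*w^2), u - v*w, -v*w^2, v, u + v*w)

/-! A 2×2 matrix is nonzero and antisymmetric iff its diagonal vanishes and
`M₂₁ = -M₁₂ ≠ 0`; for `ρ̃` these are three polynomial equations and one inequation in
`(a, …, f)`. If `e = 0` they force `f = c ≠ 0` and `d = 0`, the family `V₁`. If `e ≠ 0` they
combine to `4ed = -(f - c)²`, and `u = (c + f)/2`, `v = e`, `w = (f - c)/(2e)` exhibit the point
as `V₂(u, v, w)`. Conversely `ρ̃` is `[[0, r], [-r, 0]]` on `V₁(r, s, t)` and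
`[[0, u], [-u, 0]]` on `V₂(u, v, w)`. -/

theorem Matrix.add_transpose_eq_zero_and_ne_zero_iff_fin_two {R : Type*} [NonAssocRing R]
    [NoZeroDivisors R] [CharZero R] (M : Matrix (Fin 2) (Fin 2) R) :
    M + Mᵀ = 0 ∧ M ≠ 0 ↔ M 0 0 = 0 ∧ M 1 1 = 0 ∧ M 1 0 = -M 0 1 ∧ M 0 1 ≠ 0 := by
  simp only [← Matrix.ext_iff, Fin.forall_fin_two, add_apply, transpose_apply, zero_apply,
    add_self_eq_zero, ne_eq]
  constructor
  · rintro ⟨⟨⟨h00, h01⟩, -, h11⟩, hne⟩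
    have h10 : M 1 0 = -M 0 1 := eq_neg_of_add_eq_zero_right h01
    refine ⟨h00, h11, h10, fun h => ?_⟩
    simp_all
  · rintro ⟨h00, h11, h10, h01⟩
    refine ⟨⟨⟨h00, by rw [h10, add_neg_cancel]⟩, by rw [h10, neg_add_cancel], h11⟩, ?_⟩
    simp [h01]

theorem Matrix.antisymm_fin_two_add_transpose_eq_zero_and_ne_zero_iff {R : Type*} [NonAssocRing R]
    [NoZeroDivisors R] [CharZero R] (r : R) :
    !![0, r; -r, 0] + !![0, r; -r, 0]ᵀ = 0 ∧ !![0, r; -r, 0] ≠ 0 ↔ r ≠ 0 := by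
  simp [Matrix.add_transpose_eq_zero_and_ne_zero_iff_fin_two]

theorem ρB_add_transpose_eq_zero_and_ne_zero_iff (a b c d e f : ℝ) :
    ρB (a, b, c, d, e, f) + (ρB (a, b, c, d, e, f))ᵀ = 0 ∧ ρB (a, b, c, d, e, f) ≠ 0 ↔
      (a-d+1)*d + b*(f-c) = 0 ∧ -c^2 + f*c + (a-d-1)*e = 0 ∧
        c*(d-1) - b*e = -(c*d - b*e + f) ∧ c*d - b*e + f ≠ 0 := by
  rw [Matrix.add_transpose_eq_zero_and_ne_zero_iff_fin_two]
  rfl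

theorem ρB_V1 (r s t : ℝ) : ρB (V1 r s t) = !![0, r; -r, 0] := by
  ext i j
  fin_cases i <;> fin_cases j <;> simp [ρB, V1]; ring

theorem ρB_V2 (u v w : ℝ) : ρB (V2 u v w) = !![0, u; -u, 0] := by
  ext i j
  fin_cases i <;> fin_cases j <;> simp [ρB, V2] <;> ring

theorem exists_eq_V1_of_ρB_antisymm {a b c d e f : ℝ} (he : e = 0)
    (h22 : -c^2 + f*c + (a-d-1)*e = 0) (h21 : c*(d-1) - b*e = -(c*d - b*e + f))
    (hne : c*d - b*e + f ≠ 0) : ∃ r s t : ℝ, r ≠ 0 ∧ (a, b, c, d, e, f) = V1 r s t := by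
  subst he
  have hc : c ≠ 0 := by rintro rfl; apply hne; linarith
  have hf : f = c := by
    have : c * (f - c) = 0 := by linear_combination h22
    linarith [(mul_eq_zero.mp this).resolve_left hc]
  have hd : d = 0 := by
    have : c * d = 0 := by linear_combination (h21 - hf) / 2
    exact (mul_eq_zero.mp this).resolve_left hc
  exact ⟨c, a, b, hc, by simp [V1, hd, hf]⟩

theorem exists_eq_V2_of_ρB_antisymm {a b c d e f : ℝ} (he : e ≠ 0)
    (h11 : (a-d+1)*d + b*(f-c) = 0) (h22 : -c^2 + f*c + (a-d-1)*e = 0)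
    (h21 : c*(d-1) - b*e = -(c*d - b*e + f)) (hne : c*d - b*e + f ≠ 0) :
    ∃ u v w : ℝ, u ≠ 0 ∧ (a, b, c, d, e, f) = V2 u v w := by
  refine ⟨(c + f) / 2, e, (f - c) / (2 * e), fun hu => hne (by linarith), ?_⟩
  have hd : 4 * e * d = -(f - c)^2 := by
    linear_combination 2 * e * h11 - 2 * d * h22 + (f - c) * h21
  simp only [V2, Prod.mk.injEq]
  refine ⟨?_, ?_, ?_, ?_, trivial, ?_⟩ <;> field_simp
  · linear_combination 4 * h22 + hd
  · linear_combination -4 * e * h21 + 2 * c * hd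
  · ring
  · linear_combination hd
  · ring

theorem stmt_17 :
    {x : R6 | ρB x + (ρB x)ᵀ = 0 ∧ ρB x ≠ 0} =
      {x : R6 | ∃ r s t : ℝ, r ≠ 0 ∧ x = V1 r s t} ∪
      {x : R6 | ∃ u v w : ℝ, u ≠ 0 ∧ x = V2 u v w} := by
  ext x
  simp only [Set.mem_ofPred_eq, Set.mem_union]
  constructor
  · obtain ⟨a, b, c, d, e, f⟩ := x
    rw [ρB_add_transpose_eq_zero_and_ne_zero_iff]
    rintro ⟨h11, h22, h21, hne⟩
    by_cases he : e = 0
    · exact Or.inl (exists_eq_V1_of_ρB_antisymm he h22 h21 hne)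
    · exact Or.inr (exists_eq_V2_of_ρB_antisymm he h11 h22 h21 hne)
  · rintro (⟨r, s, t, hr, rfl⟩ | ⟨u, v, w, hu, rfl⟩)
    · rwa [ρB_V1, Matrix.antisymm_fin_two_add_transpose_eq_zero_and_ne_zero_iff]
    · rwa [ρB_V2, Matrix.antisymm_fin_two_add_transpose_eq_zero_and_ne_zero_iff]
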